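/- arXiv:2410.09617 — 2 statements merged into one kernel-verified Lean document; each statement's English description precedes it below -/
import Mathlib

section
/- For all positive integers m and k there exists n₀ such that the following holds for every n ≥ n₀: if a graph G contains the complete k-partite graph with all k parts of size n as a (not necessarily induced) subgraph, then G contains K_m as a subgraph or G contains the complete k-partite graph with all k parts of size m as an induced subgraph. -/
open SimpleGraph

/-- A family of finite graphs, given for each `n` as a predicate on graphs on `Fin n`. -/
abbrev GraphFamily := ∀ n : ℕ, SimpleGraph (Fin n) → Prop

/-- `G` contains a copy of `F` as a (not necessarily induced) subgraph:
there is an injective map of vertices sending edges to edges. -/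
def ContainsCopy {α β : Type} (G : SimpleGraph α) (F : SimpleGraph β) : Prop :=
  ∃ f : β → α, Function.Injective f ∧ ∀ ⦃u v⦄, F.Adj u v → G.Adj (f u) (f v)

/-- Membership of a graph on an arbitrary vertex type in a family, up to isomorphism. -/
def MemFam (𝓐 : GraphFamily) {β : Type} (G : SimpleGraph β) : Prop :=
  ∃ (n : ℕ) (H : SimpleGraph (Fin n)), Nonempty (G ≃g H) ∧ 𝓐 n H

/-- The family is closed under isomorphism. -/
def IsoClosed (𝓐 : GraphFamily) : Prop :=
  ∀ (n : ℕ) (G G' : SimpleGraph (Fin n)), Nonempty (G ≃g G') → 𝓐 n G → 𝓐 n G'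

/-- The complete multipartite graph with part sizes `m 0, …, m (r-1)`. -/
def completeMultipartite {r : ℕ} (m : Fin r → ℕ) : SimpleGraph (Σ i, Fin (m i)) :=
  completeMultipartiteGraph (fun i => Fin (m i))

/-- `(𝓐, 𝓐ᶜ)` is a suitable partition, witnessed by the integer `k ≥ 2`: for all
sufficiently large `n`, every complete `(k-1)`-partite graph with all parts of size
at least `n` belongs to `𝓐`, and no graph in `𝓐` contains the Turán graph `T(n,k)`
as a subgraph. -/
def SuitableWith (𝓐 : GraphFamily) (k : ℕ) : Prop :=
  2 ≤ k ∧ ∃ N : ℕ, ∀ n, N ≤ n →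
    ((∀ m : Fin (k - 1) → ℕ, (∀ i, n ≤ m i) → MemFam 𝓐 (completeMultipartite m)) ∧
     ∀ (n' : ℕ) (G : SimpleGraph (Fin n')), 𝓐 n' G → ¬ ContainsCopy G (turanGraph n k))

/-- A partition `(𝓐, 𝓐ᶜ)` is suitable: either complete graphs are eventually in `𝓐`,
or some `k ≥ 2` witnesses suitability. -/
def Suitable (𝓐 : GraphFamily) : Prop :=
  (∃ N : ℕ, ∀ n, N ≤ n → 𝓐 n ⊤) ∨ ∃ k : ℕ, SuitableWith 𝓐 k

/-- Every complete `r`-partite graph with all parts sufficiently large is in `𝓐`. -/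
def AllBigMultipartiteIn (𝓐 : GraphFamily) (r : ℕ) : Prop :=
  ∃ N : ℕ, ∀ m : Fin r → ℕ, (∀ i, N ≤ m i) → MemFam 𝓐 (completeMultipartite m)

/-- The partition `(𝓐, 𝓐ᶜ)` has (finite) abstract chromatic number `k`: complete graphs
are not eventually in `𝓐`, and `k` is the largest integer such that every complete
`(k-1)`-partite graph with all parts sufficiently large is in `𝓐`. -/
def HasAbsChromNum (𝓐 : GraphFamily) (k : ℕ) : Prop :=
  (¬ ∃ N : ℕ, ∀ n, N ≤ n → 𝓐 n ⊤) ∧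
  AllBigMultipartiteIn 𝓐 (k - 1) ∧
  ∀ j : ℕ, k ≤ j → ¬ AllBigMultipartiteIn 𝓐 j

/-- A graph parameter: a real value for every finite graph. -/
abbrev GraphParam := ∀ n : ℕ, SimpleGraph (Fin n) → ℝ

/-- A graph parameter is isomorphism-invariant and nonnegative. -/
def IsGraphParam (h : GraphParam) : Prop :=
  (∀ (n : ℕ) (G G' : SimpleGraph (Fin n)), Nonempty (G ≃g G') → h n G = h n G') ∧
  ∀ (n : ℕ) (G : SimpleGraph (Fin n)), 0 ≤ h n G

/-- `g(n, F)`: the maximum of `h` over `F`-free graphs on `n` vertices. -/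
noncomputable def exRel (h : GraphParam) (n : ℕ) {β : Type} (F : SimpleGraph β) : ℝ :=
  sSup {x : ℝ | ∃ G : SimpleGraph (Fin n), ¬ ContainsCopy G F ∧ h n G = x}

/-- `g(n, (𝓐, 𝓐ᶜ))`: the maximum of `h` over `n`-vertex graphs in `𝓐`. -/
noncomputable def exFam (h : GraphParam) (𝓐 : GraphFamily) (n : ℕ) : ℝ :=
  sSup {x : ℝ | ∃ G : SimpleGraph (Fin n), 𝓐 n G ∧ h n G = x}

/-- `G` is a complete `r`-partite graph (some parts possibly empty). -/
def IsCompMultipartite {n : ℕ} (G : SimpleGraph (Fin n)) (r : ℕ) : Prop :=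
  ∃ m : Fin r → ℕ, Nonempty (G ≃g completeMultipartite m)

/-- `g_h` is weakly `k`-ESS. -/
def WeaklyESS (h : GraphParam) (k : ℕ) : Prop :=
  ∀ (nF : ℕ) (F : SimpleGraph (Fin nF)), F.chromaticNumber = (k : ℕ∞) →
    ∀ ε : ℝ, 0 < ε → ∃ N : ℕ, ∀ n, N ≤ n →
      ∃ T : SimpleGraph (Fin n), IsCompMultipartite T (k - 1) ∧
        (1 - ε) * h n T ≤ exRel h n F ∧ exRel h n F ≤ (1 + ε) * h n T

/-- `g_h` is strongly `k`-ESS. -/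
def StronglyESS (h : GraphParam) (k : ℕ) : Prop :=
  ∀ (nF : ℕ) (F : SimpleGraph (Fin nF)), F.chromaticNumber = (k : ℕ∞) →
    ∀ ε : ℝ, 0 < ε → ∃ N : ℕ, ∀ n, N ≤ n →
      (1 - ε) * h n (turanGraph n (k - 1)) ≤ exRel h n F ∧
        exRel h n F ≤ (1 + ε) * h n (turanGraph n (k - 1))

/-- The edit distance between two graphs on the same vertex set: the size of the
symmetric difference of the edge sets. -/
noncomputable def editDist {n : ℕ} (G T : SimpleGraph (Fin n)) : ℕ :=
  (symmDiff G.edgeSet T.edgeSet).ncard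

/-- `g_h` is weakly `k`-ESS-stable. -/
def WeaklyESSStable (h : GraphParam) (k : ℕ) : Prop :=
  WeaklyESS h k ∧
  ∀ (nF : ℕ) (F : SimpleGraph (Fin nF)), F.chromaticNumber = (k : ℕ∞) →
    ∀ ε : ℝ, 0 < ε → ∃ δ : ℝ, 0 < δ ∧ ∃ N : ℕ, ∀ n, N ≤ n →
      ∀ G : SimpleGraph (Fin n), ¬ ContainsCopy G F →
        (1 - δ) * exRel h n F ≤ h n G →
        ∃ T : SimpleGraph (Fin n), IsCompMultipartite T (k - 1) ∧
          (editDist G T : ℝ) ≤ ε * (n : ℝ) ^ 2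

/-- `g_h` is strongly `k`-ESS-stable. -/
def StronglyESSStable (h : GraphParam) (k : ℕ) : Prop :=
  StronglyESS h k ∧
  ∀ (nF : ℕ) (F : SimpleGraph (Fin nF)), F.chromaticNumber = (k : ℕ∞) →
    ∀ ε : ℝ, 0 < ε → ∃ δ : ℝ, 0 < δ ∧ ∃ N : ℕ, ∀ n, N ≤ n →
      ∀ G : SimpleGraph (Fin n), ¬ ContainsCopy G F →
        (1 - δ) * exRel h n F ≤ h n G →
        (editDist G (turanGraph n (k - 1)) : ℝ) ≤ ε * (n : ℝ) ^ 2

/-- `σ(F)`: the smallest size of a color class among all proper `k`-colorings of `F`. -/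
noncomputable def graphSigma {nF : ℕ} (F : SimpleGraph (Fin nF)) (k : ℕ) : ℕ :=
  sInf {t : ℕ | ∃ C : F.Coloring (Fin k), ∃ i : Fin k,
    (Finset.univ.filter fun v => C v = i).card = t}

/-- Part sizes obtained from `m` by adding `t` parts of size `1` (adding `t`
universal vertices to the complete multipartite graph with parts `m`). -/
def addUniversal (t : ℕ) {r : ℕ} (m : Fin r → ℕ) : Fin (t + r) → ℕ :=
  fun i => if h : (i : ℕ) < t then 1 else m ⟨(i : ℕ) - t, by have := i.isLt; omega⟩

/-- `T(n, r, t)`: the Turán graph `T(n - t, r)` together with `t` universal vertices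
(the vertices with value `< t`). -/
def turanPlus (n r t : ℕ) : SimpleGraph (Fin n) :=
  SimpleGraph.fromRel fun x y =>
    (x : ℕ) < t ∨ ((x : ℕ) - t) % r ≠ ((y : ℕ) - t) % r

/-- `T⁺(n, r)`: the Turán graph `T(n, r)` with one extra edge (between `r - 1` and
`2r - 1`) inside one of its smallest parts (the residue class of `r - 1`). -/
def turanPlusEdge (n r : ℕ) : SimpleGraph (Fin n) :=
  SimpleGraph.fromRel fun x y =>
    (x : ℕ) % r ≠ (y : ℕ) % r ∨ ((x : ℕ) = r - 1 ∧ (y : ℕ) = 2 * r - 1)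

/-- `σ(𝓐, 𝓐ᶜ)`: the smallest minimum part size (= σ) of a complete `k`-partite graph,
with all `k` parts nonempty, that is contained in no member of `𝓐`. -/
noncomputable def famSigma (𝓐 : GraphFamily) (k : ℕ) : ℕ :=
  sInf {t : ℕ | ∃ m : Fin k → ℕ, (∀ i, 1 ≤ m i) ∧ (∃ i, m i = t ∧ ∀ j, m i ≤ m j) ∧
    ∀ (n : ℕ) (G : SimpleGraph (Fin n)), 𝓐 n G → ¬ ContainsCopy G (completeMultipartite m)}

/-- `g_h` is weakly `k`-ESS-sigma. -/
def WeaklyESSSigma (h : GraphParam) (k : ℕ) : Prop :=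
  ∀ (nF : ℕ) (F : SimpleGraph (Fin nF)), F.chromaticNumber = (k : ℕ∞) →
    ∃ N : ℕ, ∀ n, N ≤ n → ∃ (m : Fin (k - 1) → ℕ) (T : SimpleGraph (Fin n)),
      Nonempty (T ≃g completeMultipartite (addUniversal (graphSigma F k - 1) m)) ∧
      exRel h n F = h n T

/-- `g_h` is strongly `k`-ESS-sigma. -/
def StronglyESSSigma (h : GraphParam) (k : ℕ) : Prop :=
  ∀ (nF : ℕ) (F : SimpleGraph (Fin nF)), F.chromaticNumber = (k : ℕ∞) →
    ∃ N : ℕ, ∀ n, N ≤ n →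
      exRel h n F = h n (turanPlus n (k - 1) (graphSigma F k - 1))

/-- The number of copies of `F` in `G`: subgraphs of `G` isomorphic to `F`. -/
noncomputable def copyCount {n : ℕ} {β : Type} (G : SimpleGraph (Fin n))
    (F : SimpleGraph β) : ℕ :=
  Nat.card {H : G.Subgraph // Nonempty (F ≃g H.coe)}

/-- `g_h` is `k`-ESS-supersat. -/
def ESSSupersat (h : GraphParam) (k : ℕ) : Prop :=
  ∀ (nF : ℕ) (F : SimpleGraph (Fin nF)), F.chromaticNumber = (k : ℕ∞) →
    ∀ ε : ℝ, 0 < ε → ∃ δ : ℝ, 0 < δ ∧ ∃ N : ℕ, ∀ n, N ≤ n →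
      ∀ G : SimpleGraph (Fin n), (1 + ε) * exRel h n F < h n G →
        δ * (n : ℝ) ^ nF ≤ (_root_.copyCount G F : ℝ)

/-- A proper edge-coloring of `G`, given as a symmetric function of the two endpoints:
edges sharing a vertex receive distinct colors. -/
def ProperEdgeColoring {α C : Type} (G : SimpleGraph α) (c : α → α → C) : Prop :=
  (∀ u v, c u v = c v u) ∧
  ∀ u v w, G.Adj u v → G.Adj u w → v ≠ w → c u v ≠ c u w

/-- The edge-colored graph `(G, c)` contains a rainbow copy of `F`. -/
def HasRainbowCopy {α β C : Type} (G : SimpleGraph α) (c : α → α → C)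
    (F : SimpleGraph β) : Prop :=
  ∃ f : β → α, Function.Injective f ∧ (∀ ⦃u v⦄, F.Adj u v → G.Adj (f u) (f v)) ∧
    ∀ u v u' v', F.Adj u v → F.Adj u' v' → s(u, v) ≠ s(u', v') →
      c (f u) (f v) ≠ c (f u') (f v')

/-- The family `𝓐` is hereditary: closed under taking induced subgraphs
(equivalently, under induced-subgraph embeddings). -/
def Hereditary (𝓐 : GraphFamily) : Prop :=
  ∀ (n n' : ℕ) (G : SimpleGraph (Fin n)) (G' : SimpleGraph (Fin n')),
    𝓐 n G → Nonempty (G' ↪g G) → 𝓐 n' G'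

/-- The family `𝓐` is monotone: closed under taking subgraphs. -/
def MonotoneFam (𝓐 : GraphFamily) : Prop :=
  ∀ (n n' : ℕ) (G : SimpleGraph (Fin n)) (G' : SimpleGraph (Fin n')),
    𝓐 n G → ContainsCopy G G' → 𝓐 n' G'

/-- `(𝓐, 𝓐ᶜ)` is an edge-critical partition with abstract chromatic number `k`. -/
def EdgeCritical (𝓐 : GraphFamily) (k : ℕ) : Prop :=
  Suitable 𝓐 ∧ HasAbsChromNum 𝓐 k ∧
  ∃ N : ℕ, ∀ n, N ≤ n → ∀ (n' : ℕ) (G : SimpleGraph (Fin n')), 𝓐 n' G →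
    ¬ ContainsCopy G (turanPlusEdge n (k - 1))

/-- The graph obtained from `G` by adding a new vertex (namely `none`) joined to all
neighbors of the vertex `v`. -/
def duplicateVertex {n : ℕ} (G : SimpleGraph (Fin n)) (v : Fin n) :
    SimpleGraph (Option (Fin n)) :=
  SimpleGraph.fromRel fun x y =>
    match x, y with
    | some a, some b => G.Adj a b
    | none, some b => G.Adj v b
    | _, _ => False

/-- The graph parameter `h` is balanced for `k`. -/
def BalancedParam (h : GraphParam) (k : ℕ) : Prop :=
  ∃ a : ℝ, 0 < a ∧
    (∃ C : ℝ, 0 < C ∧ ∀ (n : ℕ) (G : SimpleGraph (Fin n)) (u v : Fin n),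
      u ≠ v → ¬ G.Adj u v →
      |h n (G ⊔ SimpleGraph.fromEdgeSet {s(u, v)}) - h n G| ≤ C * (n : ℝ) ^ a) ∧
    (∃ C : ℝ, 0 < C ∧ ∀ (n : ℕ) (G : SimpleGraph (Fin n)) (v : Fin n)
        (G'' : SimpleGraph (Fin (n + 1))), Nonempty (G'' ≃g duplicateVertex G v) →
      |h (n + 1) G'' - h n G| ≤ C * (n : ℝ) ^ (a + 1)) ∧
    (∀ c : ℝ, 0 < c → ∃ (n₀ : ℕ) (c₁ c₂ : ℝ), 0 < c₁ ∧ 0 < c₂ ∧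
      ∀ n, n₀ ≤ n → ∀ m : Fin (k - 1) → ℕ, (∀ i, c * (n : ℝ) ≤ (m i : ℝ)) →
        ∀ G : SimpleGraph (Fin n), Nonempty (G ≃g completeMultipartite m) →
          ((∀ u v : Fin n, u ≠ v → ¬ G.Adj u v →
              c₁ * (n : ℝ) ^ a ≤ h n (G ⊔ SimpleGraph.fromEdgeSet {s(u, v)}) - h n G ∧
              h n (G ⊔ SimpleGraph.fromEdgeSet {s(u, v)}) - h n G ≤ c₂ * (n : ℝ) ^ a) ∧
           (∀ (v : Fin n) (G'' : SimpleGraph (Fin (n + 1))),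
              Nonempty (G'' ≃g duplicateVertex G v) →
              c₁ * (n : ℝ) ^ (a + 1) ≤ h (n + 1) G'' - h n G ∧
              h (n + 1) G'' - h n G ≤ c₂ * (n : ℝ) ^ (a + 1)))) ∧
    (∀ c : ℝ, 0 < c → ∃ (n₀ : ℕ) (c₁ c₂ : ℝ), 0 < c₁ ∧ 0 < c₂ ∧
      ∀ n, n₀ ≤ n → ∀ m : Fin (k - 1) → ℕ, (∀ i, c * (n : ℝ) ≤ (m i : ℝ)) →
        ∀ G : SimpleGraph (Fin n), Nonempty (G ≃g completeMultipartite m) →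
          ∀ G''' : SimpleGraph (Fin n), G''' ≤ G →
            c₁ * ((G.edgeSet.ncard - G'''.edgeSet.ncard : ℕ) : ℝ) * (n : ℝ) ^ a ≤
              h n G - h n G''' ∧
            h n G - h n G''' ≤
              c₂ * ((G.edgeSet.ncard - G'''.edgeSet.ncard : ℕ) : ℝ) * (n : ℝ) ^ a)

/-!
Apply Ramsey's theorem inside each of the `k` parts of the given copy of `K_k(n)`: once
`n ≥ R(m, m)`, every part contains an `m`-clique or an independent `m`-set. If no part yields
a clique, pick an independent `m`-set in every part; together they span an induced `K_k(m)`,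
because vertices in different parts are adjacent already in the copy.
-/

open Finset

namespace SimpleGraph

variable {α : Type*} {G : SimpleGraph α}

lemma exists_isNClique_succ_of_subset_filter_adj [DecidableEq α] [DecidableRel G.Adj]
    {s : ℕ} {S T : Finset α} {v : α} (hv : v ∈ S) (hTS : T ⊆ S.filter (G.Adj v))
    (hT : G.IsNClique s T) : ∃ T' ⊆ S, G.IsNClique (s + 1) T' :=
  ⟨insert v T, insert_subset hv (hTS.trans (filter_subset _ _)),
    hT.insert fun _ hb => (mem_filter.1 (hTS hb)).2⟩

lemma card_le_card_filter_adj_add_card_filter_compl_adj [DecidableEq α] [DecidableRel G.Adj]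
    (S : Finset α) (v : α) :
    #S ≤ #(S.filter (G.Adj v)) + #(S.filter (Gᶜ.Adj v)) + 1 := by
  calc #S ≤ #(insert v (S.filter (G.Adj v) ∪ S.filter (Gᶜ.Adj v))) := by
        refine card_le_card fun u hu => ?_
        by_cases huv : v = u
        · simp [huv]
        · by_cases hadj : G.Adj v u <;> simp [hu, hadj, huv]
    _ ≤ _ := (card_insert_le _ _).trans (by grw [card_union_le])

theorem exists_isNClique_or_isNIndepSet :
    ∀ s t : ℕ, ∃ N : ℕ, ∀ {V : Type*} (G : SimpleGraph V) (S : Finset V), N ≤ #S →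
      (∃ T ⊆ S, G.IsNClique s T) ∨ ∃ T ⊆ S, G.IsNIndepSet t T
  | 0, _ => ⟨0, fun _ _ _ => Or.inl ⟨∅, empty_subset _, by simp [isNClique_iff]⟩⟩
  | _ + 1, 0 => ⟨0, fun _ _ _ => Or.inr ⟨∅, empty_subset _, by simp [isNIndepSet_iff]⟩⟩
  | s + 1, t + 1 => by
    obtain ⟨N₁, h₁⟩ := exists_isNClique_or_isNIndepSet s (t + 1)
    obtain ⟨N₂, h₂⟩ := exists_isNClique_or_isNIndepSet (s + 1) t
    refine ⟨N₁ + N₂ + 1, fun G S hS => ?_⟩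
    classical
    obtain ⟨v, hv⟩ : S.Nonempty := card_pos.1 (by omega)
    have hsplit := card_le_card_filter_adj_add_card_filter_compl_adj (G := G) S v
    by_cases hA : N₁ ≤ #(S.filter (G.Adj v))
    · rcases h₁ G _ hA with ⟨T, hTS, hT⟩ | ⟨T, hTS, hT⟩
      · exact .inl (exists_isNClique_succ_of_subset_filter_adj hv hTS hT)
      · exact .inr ⟨T, hTS.trans (filter_subset _ _), hT⟩
    · rcases h₂ G (S.filter (Gᶜ.Adj v)) (by omega) with ⟨T, hTS, hT⟩ | ⟨T, hTS, hT⟩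
      · exact .inl ⟨T, hTS.trans (filter_subset _ _), hT⟩
      · simp_rw [← isNClique_compl] at hT ⊢
        exact .inr (exists_isNClique_succ_of_subset_filter_adj hv hTS hT)

lemma IsNIndepSet.exists_embedding {m : ℕ} {T : Finset α} (hT : G.IsNIndepSet m T) :
    ∃ g : Fin m ↪ α, ∀ a b, ¬ G.Adj (g a) (g b) :=
  ⟨(T.equivFinOfCardEq hT.card_eq).symm.toEmbedding.trans (Function.Embedding.subtype _),
    fun _ _ hab => hT.isIndepSet (coe_mem _) (coe_mem _) (G.ne_of_adj hab) hab⟩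

def Copy.completeMultipartiteGraphEmbedding {ι : Type*} {V W : ι → Type*}
    (c : Copy (completeMultipartiteGraph V) G) (g : ∀ i, W i ↪ V i)
    (hg : ∀ i a b, ¬ G.Adj (c ⟨i, g i a⟩) (c ⟨i, g i b⟩)) :
    completeMultipartiteGraph W ↪g G where
  toFun x := c ⟨x.1, g x.1 x.2⟩
  inj' := by
    rintro ⟨i, a⟩ ⟨j, b⟩ h
    obtain ⟨rfl, hab⟩ := Sigma.mk.inj_iff.1 (c.injective h)
    dsimp only at hab ⊢
    rw [(g i).injective (eq_of_heq hab)]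
  map_rel_iff' {x y} := by
    obtain ⟨i, a⟩ := x
    obtain ⟨j, b⟩ := y
    simp only [comap_adj, top_adj]
    refine ⟨fun h hij => ?_, fun hij => c.toHom.map_adj (by simpa using hij)⟩
    subst hij
    exact hg i a b h

end SimpleGraph

open SimpleGraph

lemma containsCopy_iff_isContained {α β : Type} {G : SimpleGraph α} {F : SimpleGraph β} :
    ContainsCopy G F ↔ F ⊑ G :=
  ⟨fun ⟨f, hf, hadj⟩ => ⟨⟨⟨f, @hadj⟩, hf⟩⟩,
    fun ⟨c⟩ => ⟨c, c.injective, fun _ _ => c.toHom.map_adj⟩⟩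

theorem multipartite_ramsey_general (m k : ℕ) :
    ∃ n₀ : ℕ, ∀ n, n₀ ≤ n → ∀ (α : Type) [Fintype α] (G : SimpleGraph α),
      ContainsCopy G (completeMultipartite fun _ : Fin k => n) →
      ContainsCopy G (⊤ : SimpleGraph (Fin m)) ∨
        Nonempty (completeMultipartite (fun _ : Fin k => m) ↪g G) := by
  obtain ⟨N, hN⟩ := exists_isNClique_or_isNIndepSet m m
  refine ⟨N, fun n hn α _ G hG => ?_⟩
  obtain ⟨c⟩ := containsCopy_iff_isContained.1 hG
  let part (i : Fin k) : Fin n ↪ α := (Function.Embedding.sigmaMk i).trans c.toEmbedding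
  by_cases hclique : ∃ i, ¬ (G.comap (part i)).CliqueFree m
  · obtain ⟨i, hi⟩ := hclique
    exact .inl <| containsCopy_iff_isContained.2 <|
      ((not_cliqueFree_iff_top_isContained m).1 hi).trans (Embedding.comap (part i) G).isContained
  · push Not at hclique
    have hindep (i : Fin k) : ∃ g : Fin m ↪ Fin n, ∀ a b, ¬ G.Adj (c ⟨i, g a⟩) (c ⟨i, g b⟩) := by
      rcases hN (G.comap (part i)) univ (by simpa using hn) with ⟨T, -, hT⟩ | ⟨T, -, hT⟩
      · exact (hclique i T hT).elim
      · exact hT.exists_embedding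
    choose g hg using hindep
    exact .inr ⟨c.completeMultipartiteGraphEmbedding g hg⟩

/-- For all positive `m`, `k` there is `n₀` such that for all `n ≥ n₀`:
any graph containing the complete `k`-partite graph with all parts of size `n` as a
subgraph contains `K_m` as a subgraph, or the complete `k`-partite graph with all
parts of size `m` as an induced subgraph. -/
theorem multipartite_ramsey (m k : ℕ) (hm : 0 < m) (hk : 0 < k) :
    ∃ n₀ : ℕ, ∀ n, n₀ ≤ n → ∀ (α : Type) [Fintype α] (G : SimpleGraph α),
      ContainsCopy G (completeMultipartite fun _ : Fin k => n) →
      ContainsCopy G (⊤ : SimpleGraph (Fin m)) ∨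
        Nonempty (completeMultipartite (fun _ : Fin k => m) ↪g G) :=
  multipartite_ramsey_general m k
end

section
/- Let F be a graph with chromatic number k ≥ 2 and σ(F) = t. Then there exists N such that for all n ≥ N, every proper edge-coloring of the complete k-partite graph with one part of size t and k−1 parts of size n contains a rainbow copy of F. -/
open SimpleGraph

/-- Part sizes: one part of size `t`, and `k - 1` parts of size `n`. -/
def unbalParts (k t n : ℕ) : Fin k → ℕ := fun i => if (i : ℕ) = 0 then t else n


/-! Embed `F` greedily, vertex by vertex, each vertex into the part indexed by its color in a
proper `k`-coloring whose class `0` has the minimal size `σ(F) = t`; that class fills the small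
part and, being independent, spans no edges. When a vertex `a` is added to an already placed
rainbow set `S`, a candidate image `w` is ruled out only if it is already used (at most `|S|`
choices) or if some new edge `w (f u)` repeats the color of an old edge `(f p) (f q)`: since the
coloring is proper at `f u`, each triple `(u, p, q)` excludes at most one `w`; two new edges
share the endpoint `w` and so differ in color anyway. Hence parts of size larger than
`|F| + |F| ^ 3` leave room at every step. -/

open Finset

section RainbowEmbedding

variable {α β C : Type} {G : SimpleGraph α} {c : α → α → C} {F : SimpleGraph β}

variable (G c F) in
def IsRainbowEmbeddingOn (f : β → α) (S : Finset β) : Prop :=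
  Set.InjOn f S ∧ (∀ u ∈ S, ∀ v ∈ S, F.Adj u v → G.Adj (f u) (f v)) ∧
    ∀ u ∈ S, ∀ v ∈ S, ∀ u' ∈ S, ∀ v' ∈ S, F.Adj u v → F.Adj u' v' → s(u, v) ≠ s(u', v') →
      c (f u) (f v) ≠ c (f u') (f v')

lemma isRainbowEmbeddingOn_of_independent {f : β → α} {S : Finset β} (hf : Set.InjOn f S)
    (hS : ∀ u ∈ S, ∀ v ∈ S, ¬ F.Adj u v) : IsRainbowEmbeddingOn G c F f S :=
  ⟨hf, fun u hu v hv huv => (hS u hu v hv huv).elim,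
    fun u hu v hv _ _ _ _ huv => (hS u hu v hv huv).elim⟩

lemma IsRainbowEmbeddingOn.hasRainbowCopy [Fintype β] {f : β → α}
    (hf : IsRainbowEmbeddingOn G c F f univ) : HasRainbowCopy G c F :=
  ⟨f, fun u v h => hf.1 (mem_univ u) (mem_univ v) h,
    fun u v => hf.2.1 u (mem_univ u) v (mem_univ v),
    fun u v u' v' => hf.2.2 u (mem_univ u) v (mem_univ v) u' (mem_univ u') v' (mem_univ v')⟩

open scoped Classical in
lemma ProperEdgeColoring.card_filter_adj_color_eq_le_one (hc : ProperEdgeColoring G c)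
    (W : Finset α) (x : α) (col : C) : #{w ∈ W | G.Adj w x ∧ c w x = col} ≤ 1 := by
  refine card_le_one.2 fun w₁ hw₁ w₂ hw₂ => ?_
  simp only [mem_filter] at hw₁ hw₂
  by_contra hne
  refine hc.2 x w₁ w₂ hw₁.2.1.symm hw₂.2.1.symm hne ?_
  rw [hc.1 x w₁, hc.1 x w₂, hw₁.2.2, hw₂.2.2]

lemma IsRainbowEmbeddingOn.update_insert [DecidableEq β] (hc : ProperEdgeColoring G c)
    {f : β → α} {S : Finset β} (hf : IsRainbowEmbeddingOn G c F f S) {a : β} (ha : a ∉ S)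
    {w : α} (hw_new : w ∉ f '' S) (hw_adj : ∀ u ∈ S, F.Adj a u → G.Adj w (f u))
    (hw_color : ∀ u ∈ S, F.Adj a u → ∀ p ∈ S, ∀ q ∈ S, c w (f u) ≠ c (f p) (f q)) :
    IsRainbowEmbeddingOn G c F (Function.update f a w) (insert a S) := by
  set g := Function.update f a w
  have hga : g a = w := Function.update_self a w f
  have hg : ∀ v ∈ S, g v = f v := fun v hv => Function.update_of_ne (ne_of_mem_of_not_mem hv ha) w f
  have hgS : Set.EqOn f g S := fun v hv => (hg v hv).symm
  have edge : ∀ u ∈ insert a S, ∀ v ∈ insert a S, F.Adj u v → (u ∈ S ∧ v ∈ S) ∨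
      ∃ x ∈ S, F.Adj a x ∧ s(u, v) = s(a, x) ∧ c (g u) (g v) = c w (f x) := by
    intro u hu v hv huv
    rcases mem_insert.1 hu with hua | hu <;> rcases mem_insert.1 hv with hva | hv
    · exact (huv.ne (hua.trans hva.symm)).elim
    · exact Or.inr ⟨v, hv, hua ▸ huv, by rw [hua], by rw [hua, hga, hg v hv]⟩
    · exact Or.inr ⟨u, hu, hva ▸ huv.symm, by rw [hva, Sym2.eq_swap],
        by rw [hva, hga, hg u hu, hc.1]⟩
    · exact Or.inl ⟨hu, hv⟩
  refine ⟨?_, ?_, ?_⟩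
  · rw [coe_insert, Set.injOn_insert ha, hga, ← hgS.image_eq]
    exact ⟨hf.1.congr hgS, hw_new⟩
  · intro u hu v hv huv
    rcases edge u hu v hv huv with ⟨hu, hv⟩ | ⟨x, hx, hax, hex, -⟩
    · rw [hg u hu, hg v hv]
      exact hf.2.1 u hu v hv huv
    · rcases Sym2.eq_iff.1 hex with ⟨hua, hvx⟩ | ⟨hux, hva⟩
      · rw [hua, hvx, hga, hg x hx]
        exact hw_adj x hx hax
      · rw [hux, hva, hga, hg x hx]
        exact (hw_adj x hx hax).symm
  · intro u hu v hv u' hu' v' hv' huv hu'v' hne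
    rcases edge u hu v hv huv with ⟨hu, hv⟩ | ⟨x, hx, hax, hex, hcx⟩ <;>
      rcases edge u' hu' v' hv' hu'v' with ⟨hu', hv'⟩ | ⟨x', hx', hax', hex', hcx'⟩
    · rw [hg u hu, hg v hv, hg u' hu', hg v' hv']
      exact hf.2.2 u hu v hv u' hu' v' hv' huv hu'v' hne
    · rw [hcx', hg u hu, hg v hv]
      exact (hw_color x' hx' hax' u hu v hv).symm
    · rw [hcx, hg u' hu', hg v' hv']
      exact hw_color x hx hax u' hu' v' hv'
    · have hxx' : x ≠ x' := by
        rintro rfl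
        exact hne (hex.trans hex'.symm)
      rw [hcx, hcx']
      exact hc.2 w (f x) (f x') (hw_adj x hx hax) (hw_adj x' hx' hax')
        fun h => hxx' (hf.1 hx hx' h)

lemma IsRainbowEmbeddingOn.exists_update_insert [DecidableEq β]
    (hc : ProperEdgeColoring G c) {f : β → α} {S : Finset β}
    (hf : IsRainbowEmbeddingOn G c F f S) {a : β} (ha : a ∉ S) (W : Finset α)
    (hW : ∀ w ∈ W, ∀ u ∈ S, F.Adj a u → G.Adj w (f u)) (hcard : #S + #S ^ 3 < #W) :
    ∃ w ∈ W, IsRainbowEmbeddingOn G c F (Function.update f a w) (insert a S) := by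
  classical
  set repeating : Finset α := (S ×ˢ S ×ˢ S).biUnion fun x =>
    {w ∈ W | F.Adj a x.1 ∧ c w (f x.1) = c (f x.2.1) (f x.2.2)}
  have h_repeating : #repeating ≤ #S ^ 3 := by
    calc #repeating ≤ #(S ×ˢ S ×ˢ S) * 1 := by
          refine card_biUnion_le_card_mul _ _ 1 fun x hx => le_trans (card_le_card ?_)
            (hc.card_filter_adj_color_eq_le_one W (f x.1) (c (f x.2.1) (f x.2.2)))
          intro w hw
          simp only [mem_filter] at hw ⊢
          exact ⟨hw.1, hW w hw.1 x.1 (mem_product.1 hx).1 hw.2.1, hw.2.2⟩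
      _ = #S ^ 3 := by rw [card_product, card_product]; ring
  obtain ⟨w, hwW, hw⟩ : ∃ w ∈ W, w ∉ S.image f ∪ repeating := by
    by_contra! h
    have := (card_le_card h).trans (card_union_le _ _)
    have := card_image_le (s := S) (f := f)
    omega
  have hw_new : w ∉ f '' S := by
    rw [← coe_image, mem_coe]
    exact fun h => hw (mem_union_left _ h)
  refine ⟨w, hwW, hf.update_insert hc ha hw_new (hW w hwW)
    fun u hu hau p hp q hq hcol => hw (mem_union_right _ ?_)⟩
  exact mem_biUnion.2 ⟨(u, p, q), mem_product.2 ⟨hu, mem_product.2 ⟨hp, hq⟩⟩,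
    mem_filter.2 ⟨hwW, hau, hcol⟩⟩

theorem hasRainbowCopy_of_large_candidates [Fintype β]
    (hc : ProperEdgeColoring G c) (cand : β → Finset α)
    (hjoin : ∀ u v, F.Adj u v → ∀ x ∈ cand u, ∀ y ∈ cand v, G.Adj x y)
    (S₀ : Finset β) (hS₀ : ∀ u ∈ S₀, ∀ v ∈ S₀, ¬ F.Adj u v) (f₀ : β → α)
    (hf₀ : Set.InjOn f₀ S₀) (hf₀cand : ∀ v ∈ S₀, f₀ v ∈ cand v)
    (hlarge : ∀ v ∉ S₀, Fintype.card β + Fintype.card β ^ 3 < #(cand v)) :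
    HasRainbowCopy G c F := by
  classical
  suffices ∀ s : Finset β, ∃ f : β → α,
      IsRainbowEmbeddingOn G c F f (S₀ ∪ s) ∧ ∀ v ∈ S₀ ∪ s, f v ∈ cand v by
    obtain ⟨f, hf, -⟩ := this univ
    rw [union_eq_right.2 (subset_univ S₀)] at hf
    exact hf.hasRainbowCopy
  intro s
  induction s using Finset.induction_on with
  | empty =>
    rw [union_empty]
    exact ⟨f₀, isRainbowEmbeddingOn_of_independent hf₀ hS₀, hf₀cand⟩
  | insert a s _ ih =>
    obtain ⟨f, hf, hf_cand⟩ := ih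
    rw [union_insert]
    by_cases haS : a ∈ S₀ ∪ s
    · rw [insert_eq_of_mem haS]
      exact ⟨f, hf, hf_cand⟩
    have hcard : #(S₀ ∪ s) + #(S₀ ∪ s) ^ 3 < #(cand a) := by
      have hle := card_le_univ (S₀ ∪ s)
      have := Nat.pow_le_pow_left hle 3
      have := hlarge a fun h => haS (mem_union_left s h)
      omega
    obtain ⟨w, hw, hf'⟩ := hf.exists_update_insert hc haS (cand a)
      (fun w hw u hu hau => hjoin a u hau w hw (f u) (hf_cand u hu)) hcard
    refine ⟨_, hf', fun v hv => ?_⟩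
    rcases mem_insert.1 hv with rfl | hv
    · rwa [Function.update_self]
    · rw [Function.update_of_ne (ne_of_mem_of_not_mem hv haS)]
      exact hf_cand v hv

end RainbowEmbedding

theorem hasRainbowCopy_completeMultipartiteGraph {ι β C : Type} [DecidableEq ι] [Fintype β]
    {V : ι → Type} [∀ i, Fintype (V i)] {F : SimpleGraph β} (χ : F.Coloring ι) (i₀ : ι)
    (h₀ : #{v | χ v = i₀} ≤ Fintype.card (V i₀))
    (hV : ∀ i ≠ i₀, Fintype.card β + Fintype.card β ^ 3 < Fintype.card (V i))
    {c : (Σ i, V i) → (Σ i, V i) → C} (hc : ProperEdgeColoring (completeMultipartiteGraph V) c) :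
    HasRainbowCopy (completeMultipartiteGraph V) c F := by
  classical
  have hemb : ∀ i, Nonempty ({v // χ v = i} ↪ V i) := by
    refine fun i => Function.Embedding.nonempty_of_card_le ?_
    rw [Fintype.card_subtype]
    by_cases hi : i = i₀
    · exact hi ▸ h₀
    · have := card_le_univ {v | χ v = i}
      have := hV i hi
      omega
  let e i := (hemb i).some
  let f₀ : β → Σ i, V i := Sigma.map id (fun i => e i) ∘ (Equiv.sigmaFiberEquiv χ).symm
  have hf₀ : f₀.Injective :=
    (Function.injective_id.sigma_map fun i => (e i).injective).comp (Equiv.injective _)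
  have hf₀_fst : ∀ v, (f₀ v).1 = χ v := fun _ => rfl
  let cand v : Finset (Σ i, V i) := univ.map (Function.Embedding.sigmaMk (χ v))
  have hcand : ∀ v x, x ∈ cand v ↔ x.1 = χ v := by
    rintro v ⟨i, y⟩
    simp only [cand, mem_map, mem_univ, true_and, Function.Embedding.sigmaMk_apply]
    exact ⟨fun ⟨_, h⟩ => (Sigma.mk.inj_iff.1 h).1.symm, fun h => by subst h; exact ⟨y, rfl⟩⟩
  refine hasRainbowCopy_of_large_candidates hc cand ?_ {v | χ v = i₀} ?_ f₀ hf₀.injOn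
    (fun v _ => (hcand v _).2 (hf₀_fst v)) fun v hv => ?_
  · intro u v huv x hx y hy
    show x.1 ≠ y.1
    rw [(hcand u x).1 hx, (hcand v y).1 hy]
    exact χ.valid huv
  · intro u hu v hv huv
    simp only [mem_filter, mem_univ, true_and] at hu hv
    exact χ.valid huv (hu.trans hv.symm)
  · simp only [mem_filter, mem_univ, true_and] at hv
    simpa [cand] using hV _ hv

lemma exists_coloring_card_filter_eq_graphSigma {nF k : ℕ} {F : SimpleGraph (Fin nF)}
    (hF : F.Colorable k) (j : Fin k) :
    ∃ C : F.Coloring (Fin k), #{v | C v = j} = graphSigma F k := by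
  obtain ⟨C₀, i, hi⟩ : graphSigma F k ∈ {t : ℕ | ∃ C : F.Coloring (Fin k), ∃ i : Fin k,
      #{v | C v = i} = t} := Nat.sInf_mem ⟨_, hF.some, j, rfl⟩
  refine ⟨(SimpleGraph.Embedding.completeGraph (Equiv.swap i j).toEmbedding).toHom.comp C₀, ?_⟩
  rw [← hi]
  congr 1
  ext v
  simp [Equiv.swap_apply_eq_iff]

/-- Let `F` have chromatic number `k ≥ 2` and `σ(F) = t`. Then for
all sufficiently large `n`, every proper edge-coloring of the complete `k`-partite
graph with one part of size `t` and `k - 1` parts of size `n` contains a rainbow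
copy of `F`. -/
theorem rainbow_in_unbalanced_multipartite (k t nF : ℕ) (hk : 2 ≤ k)
    (F : SimpleGraph (Fin nF)) (hchi : F.chromaticNumber = (k : ℕ∞))
    (ht : graphSigma F k = t) :
    ∃ N : ℕ, ∀ n, N ≤ n → ∀ (C : Type)
      (c : (Σ i, Fin (unbalParts k t n i)) → (Σ i, Fin (unbalParts k t n i)) → C),
      ProperEdgeColoring (completeMultipartite (unbalParts k t n)) c →
      HasRainbowCopy (completeMultipartite (unbalParts k t n)) c F := by
  let i₀ : Fin k := ⟨0, by omega⟩
  obtain ⟨χ, hCc⟩ := exists_coloring_card_filter_eq_graphSigma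
    (chromaticNumber_le_iff_colorable.1 hchi.le) i₀
  refine ⟨nF + nF ^ 3 + 1, fun n hn C c hc => ?_⟩
  refine hasRainbowCopy_completeMultipartiteGraph χ i₀ ?_ (fun i hi => ?_) hc
  · simp [i₀, unbalParts, hCc, ht]
  · have : (i : ℕ) ≠ 0 := fun h => hi (Fin.ext h)
    simp only [unbalParts, Fintype.card_fin, this, if_false]
    omega
end
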